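/- Let 0 ≤ s ≤ 2^n and write s = Σ_{i=0}^{t} 2^{n-k_i} where 1 ≤ k_0 < k_1 < ⋯ < k_t are the positions of the 1-bits in the binary representation of s. Then the total influence of the lexicographic function ℓ_n⟨s⟩ equals Σ_{i=0}^{t} (k_i − 2i)·2^{1−k_i}. -/
import Mathlib


noncomputable section

/-- Number of neighbors of `x` in the Hamming cube at which `f` differs from `f x`. -/
def sensitivity {n : ℕ} (f : (Fin n → Bool) → ℝ) (x : Fin n → Bool) : ℕ :=
  (Finset.univ.filter fun i : Fin n => f (Function.update x i (!(x i))) ≠ f x).card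

/-- Total influence as average sensitivity: I[f] = (1/2^n) Σ_x S_f(x). -/
def sensInfluence {n : ℕ} (f : (Fin n → Bool) → ℝ) : ℝ :=
  (∑ x : Fin n → Bool, (sensitivity f x : ℝ)) / 2 ^ n

/-- Rank of `x` in the lexicographic order on {-1,1}^n, where `true` (= -1) comes
first and coordinate 0 is the most significant. -/
def lexRank {n : ℕ} (x : Fin n → Bool) : ℕ :=
  ∑ i : Fin n, (if x i then 0 else 2 ^ (n - 1 - (i : ℕ)))

/-- The lexicographic function ℓ_n⟨s⟩: value -1 (true) on the initial segment of
size `s` in lexicographic order, +1 elsewhere. -/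
def lexF (n s : ℕ) : (Fin n → Bool) → ℝ :=
  fun x => if lexRank x < s then -1 else 1

open Finset

lemma lexRank_cons {n : ℕ} (b : Bool) (y : Fin n → Bool) :
    lexRank (Fin.cons b y) = (if b then 0 else 2 ^ n) + lexRank y := by
  unfold lexRank
  rw [Fin.sum_univ_succ]
  simp [Fin.cons_succ, Nat.sub_sub, Nat.add_comm 1]

lemma lexRank_lt : ∀ {n : ℕ} (y : Fin n → Bool), lexRank y < 2 ^ n := by
  intro n
  induction n with
  | zero => intro y; simp [lexRank]
  | succ n ih =>
    intro y
    rw [← Fin.cons_self_tail y, lexRank_cons]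
    have := ih (Fin.tail y)
    have h2 : (2:ℕ)^(n+1) = 2^n + 2^n := by ring
    cases y 0 <;> simp <;> omega

lemma sum_cube {n : ℕ} {M : Type*} [AddCommMonoid M] (F : (Fin (n+1) → Bool) → M) :
    ∑ x : Fin (n+1) → Bool, F x =
      (∑ y : Fin n → Bool, F (Fin.cons true y)) + (∑ y : Fin n → Bool, F (Fin.cons false y)) := by
  rw [← Equiv.sum_comp (Fin.consEquiv (fun _ => Bool)) F, Fintype.sum_prod_type, Fintype.sum_bool]
  rfl

lemma sensitivity_cons {n : ℕ} (f : (Fin (n+1) → Bool) → ℝ) (b : Bool) (y : Fin n → Bool) :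
    sensitivity f (Fin.cons b y) =
      (if f (Fin.cons (!b) y) ≠ f (Fin.cons b y) then 1 else 0) +
      sensitivity (fun z => f (Fin.cons b z)) y := by
  unfold sensitivity
  rw [Finset.card_filter, Finset.card_filter, Fin.sum_univ_succ]
  congr 1
  · simp [Fin.update_cons_zero]
  · apply Finset.sum_congr rfl
    intro i _
    simp [Fin.cons_succ, ← Fin.cons_update]

lemma sensitivity_const {n : ℕ} (c : ℝ) (y : Fin n → Bool) :
    sensitivity (fun _ => c) y = 0 := by
  simp [sensitivity]

def Tsum (n s : ℕ) : ℕ := ∑ x : Fin n → Bool, sensitivity (lexF n s) x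

lemma cnt_lt : ∀ (n s : ℕ), s ≤ 2 ^ n →
    (∑ y : Fin n → Bool, if lexRank y < s then (1:ℕ) else 0) = s := by
  intro n
  induction n with
  | zero =>
    intro s hs
    have : ∀ y : Fin 0 → Bool, lexRank y = 0 := by intro y; simp [lexRank]
    interval_cases s <;> simp [this]
  | succ n ih =>
    intro s hs
    rw [sum_cube]
    by_cases hc : s ≤ 2 ^ n
    · have h1 : ∀ y : Fin n → Bool,
          (if lexRank (Fin.cons true y) < s then (1:ℕ) else 0) = if lexRank y < s then 1 else 0 := by
        intro y; rw [lexRank_cons]; simp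
      have h2 : ∀ y : Fin n → Bool,
          (if lexRank (Fin.cons false y) < s then (1:ℕ) else 0) = 0 := by
        intro y; rw [lexRank_cons]; simp; omega
      simp only [h1, h2, Finset.sum_const_zero, add_zero]
      exact ih s hc
    · push_neg at hc
      obtain ⟨s', rfl⟩ : ∃ s', s = 2 ^ n + s' := ⟨s - 2^n, by omega⟩
      have hs' : s' ≤ 2 ^ n := by
        have : (2:ℕ)^(n+1) = 2^n + 2^n := by ring
        omega
      have h1 : ∀ y : Fin n → Bool,
          (if lexRank (Fin.cons true y) < 2 ^ n + s' then (1:ℕ) else 0) = 1 := by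
        intro y; rw [lexRank_cons]
        have := lexRank_lt y
        simp; omega
      have h2 : ∀ y : Fin n → Bool,
          (if lexRank (Fin.cons false y) < 2 ^ n + s' then (1:ℕ) else 0)
            = if lexRank y < s' then 1 else 0 := by
        intro y; rw [lexRank_cons]; simp
      simp only [h1, h2, Finset.sum_const, Finset.card_univ, smul_eq_mul, mul_one]
      rw [ih s' hs']
      simp [Fintype.card_fun]

lemma lexF_cons_true {n s : ℕ} (y : Fin n → Bool) :
    lexF (n+1) s (Fin.cons true y) = lexF n s y := by
  simp [lexF, lexRank_cons]

lemma lexF_cons_false {n s : ℕ} (y : Fin n → Bool) :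
    lexF (n+1) s (Fin.cons false y) = if 2 ^ n + lexRank y < s then -1 else 1 := by
  simp [lexF, lexRank_cons]

lemma Tsum_rec_low {n s : ℕ} (hs : s ≤ 2 ^ n) :
    Tsum (n+1) s = Tsum n s + 2 * s := by
  have hfalse : ∀ y : Fin n → Bool, lexF (n+1) s (Fin.cons false y) = 1 := by
    intro y; rw [lexF_cons_false]; simp; omega
  have hind : ∀ (b : Bool) (y : Fin n → Bool),
      (if lexF (n+1) s (Fin.cons (!b) y) ≠ lexF (n+1) s (Fin.cons b y) then (1:ℕ) else 0)
        = if lexRank y < s then 1 else 0 := by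
    intro b y
    cases b
    · rw [Bool.not_false, hfalse, lexF_cons_true]
      unfold lexF
      by_cases h : lexRank y < s <;> simp [h] <;> norm_num
    · rw [Bool.not_true, hfalse, lexF_cons_true]
      unfold lexF
      by_cases h : lexRank y < s <;> simp [h] <;> norm_num
  unfold Tsum
  rw [sum_cube]
  have e1 : ∀ y : Fin n → Bool,
      sensitivity (lexF (n+1) s) (Fin.cons true y)
        = (if lexRank y < s then 1 else 0) + sensitivity (lexF n s) y := by
    intro y
    rw [sensitivity_cons, hind]
    congr 1
    congr 1
    funext z
    exact lexF_cons_true z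
  have e2 : ∀ y : Fin n → Bool,
      sensitivity (lexF (n+1) s) (Fin.cons false y)
        = (if lexRank y < s then 1 else 0) := by
    intro y
    rw [sensitivity_cons, hind]
    have : (fun z => lexF (n+1) s (Fin.cons false z)) = fun _ => (1:ℝ) := by
      funext z; exact hfalse z
    rw [this, sensitivity_const, add_zero]
  simp only [e1, e2, Finset.sum_add_distrib, cnt_lt n s hs]
  ring

lemma cnt_ge {n s : ℕ} (hs : s ≤ 2 ^ n) :
    (∑ y : Fin n → Bool, if lexRank y < s then (0:ℕ) else 1) = 2 ^ n - s := by
  have h : (∑ y : Fin n → Bool, if lexRank y < s then (1:ℕ) else 0)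
      + (∑ y : Fin n → Bool, if lexRank y < s then (0:ℕ) else 1)
      = ∑ y : Fin n → Bool, 1 := by
    rw [← Finset.sum_add_distrib]
    apply Finset.sum_congr rfl
    intro y _
    by_cases h : lexRank y < s <;> simp [h]
  rw [cnt_lt n s hs] at h
  have hcard : (∑ y : Fin n → Bool, (1:ℕ)) = 2 ^ n := by
    simp [Fintype.card_fun]
  omega

lemma Tsum_rec_high {n s' : ℕ} (hs : s' ≤ 2 ^ n) :
    Tsum (n+1) (2 ^ n + s') = Tsum n s' + 2 * (2 ^ n - s') := by
  set s := 2 ^ n + s' with hsdef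
  have htrue : ∀ y : Fin n → Bool, lexF (n+1) s (Fin.cons true y) = -1 := by
    intro y; rw [lexF_cons_true]
    have := lexRank_lt y
    simp [lexF]; omega
  have hfalse : ∀ y : Fin n → Bool, lexF (n+1) s (Fin.cons false y) = lexF n s' y := by
    intro y; rw [lexF_cons_false]
    simp [lexF, hsdef]
  have hind : ∀ (b : Bool) (y : Fin n → Bool),
      (if lexF (n+1) s (Fin.cons (!b) y) ≠ lexF (n+1) s (Fin.cons b y) then (1:ℕ) else 0)
        = if lexRank y < s' then 0 else 1 := by
    intro b y
    cases b
    · rw [Bool.not_false, htrue, hfalse]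
      unfold lexF
      by_cases h : lexRank y < s' <;> simp [h] <;> norm_num
    · rw [Bool.not_true, htrue, hfalse]
      unfold lexF
      by_cases h : lexRank y < s' <;> simp [h] <;> norm_num
  unfold Tsum
  rw [sum_cube]
  have e1 : ∀ y : Fin n → Bool,
      sensitivity (lexF (n+1) s) (Fin.cons true y)
        = (if lexRank y < s' then 0 else 1) := by
    intro y
    rw [sensitivity_cons, hind]
    have : (fun z => lexF (n+1) s (Fin.cons true z)) = fun _ => (-1:ℝ) := by
      funext z; exact htrue z
    rw [this, sensitivity_const, add_zero]
  have e2 : ∀ y : Fin n → Bool,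
      sensitivity (lexF (n+1) s) (Fin.cons false y)
        = (if lexRank y < s' then 0 else 1) + sensitivity (lexF n s') y := by
    intro y
    rw [sensitivity_cons, hind]
    congr 1
    congr 1
    funext z
    exact hfalse z
  simp only [e1, e2, Finset.sum_add_distrib, cnt_ge hs]
  ring

lemma Tsum_zero (n : ℕ) : Tsum n 0 = 0 := by
  unfold Tsum
  have : lexF n 0 = fun _ => (1:ℝ) := by
    funext x; simp [lexF]
  rw [this]
  simp [sensitivity_const]

lemma sum_bits_lt : ∀ (t : ℕ) (k : ℕ → ℕ) (n : ℕ), (∀ i < t, k i < k (i+1)) → (∀ i ≤ t, k i ≤ n) →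
    (∑ i ∈ range (t+1), 2 ^ (n - k i)) < 2 ^ (n - k 0 + 1) := by
  intro t
  induction t with
  | zero =>
    intro k n _ _
    rw [Finset.sum_range_one]
    exact Nat.pow_lt_pow_right one_lt_two (Nat.lt_succ_self _)
  | succ t ih =>
    intro k n hmono hkn
    rw [Finset.sum_range_succ']
    have h1 : (∑ i ∈ range (t+1), 2 ^ (n - k (i+1))) < 2 ^ (n - k 1 + 1) :=
      ih (fun i => k (i+1)) n (fun i hi => hmono (i+1) (by omega))
        (fun i hi => hkn (i+1) (by omega))
    have hk01 : k 0 < k 1 := hmono 0 (by omega)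
    have hk1n : k 1 ≤ n := hkn 1 (by omega)
    have hle : n - k 1 + 1 ≤ n - k 0 := by omega
    have h2 : (2:ℕ) ^ (n - k 1 + 1) ≤ 2 ^ (n - k 0) := Nat.pow_le_pow_right (by omega) hle
    have h3 : (2:ℕ) ^ (n - k 0 + 1) = 2 ^ (n - k 0) + 2 ^ (n - k 0) := by ring
    omega

lemma main_ind : ∀ (n t : ℕ) (k : ℕ → ℕ), (∀ i < t, k i < k (i+1)) → 1 ≤ k 0 →
    (∀ i ≤ t, k i ≤ n) →
    (Tsum n (∑ i ∈ range (t+1), 2 ^ (n - k i)) : ℝ)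
      = ∑ i ∈ range (t+1), ((k i : ℝ) - 2 * i) * 2 ^ (n + 1 - k i) := by
  intro n
  induction n with
  | zero =>
    intro t k _ hk0 hkn
    have := hkn 0 (by omega)
    omega
  | succ n ih =>
    intro t k hmono hk0 hkn
    have hgrow : ∀ i, i ≤ t → k 0 + i ≤ k i := by
      intro i
      induction i with
      | zero => simp
      | succ j ihj =>
        intro h
        have h1 := hmono j (by omega)
        have h2 := ihj (by omega)
        omega
    by_cases hk1 : k 0 = 1
    · -- top bit set: s = 2^n + s'
      cases t with
      | zero =>
        have hsval : (∑ i ∈ range 1, 2 ^ (n + 1 - k i)) = 2 ^ n + 0 := by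
          simp [hk1]
        rw [hsval, Tsum_rec_high (by omega), Tsum_zero]
        simp [hk1]
        push_cast
        ring
      | succ t' =>
        have hk12 : 2 ≤ k 1 := by have : k 0 < k 1 := hmono 0 (by omega); omega
        set k'' : ℕ → ℕ := fun i => k (i+1) - 1 with hk''
        have hmono'' : ∀ i < t', k'' i < k'' (i+1) := by
          intro i hi
          have h1 := hmono (i+1) (by omega)
          have h2 : k 0 + (i+1) ≤ k (i+1) := hgrow (i+1) (by omega)
          simp only [hk'']
          omega
        have hk0'' : 1 ≤ k'' 0 := by show 1 ≤ k 1 - 1; omega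
        have hkn'' : ∀ i ≤ t', k'' i ≤ n := by
          intro i hi
          have := hkn (i+1) (by omega)
          simp only [hk'']
          omega
        set s' := ∑ i ∈ range (t'+1), 2 ^ (n - k'' i) with hs'
        have hs'lt : s' < 2 ^ (n - k'' 0 + 1) := sum_bits_lt t' k'' n hmono'' hkn''
        have hs'le : s' ≤ 2 ^ n := by
          have hn0 := hkn'' 0 (by omega)
          have : (2:ℕ) ^ (n - k'' 0 + 1) ≤ 2 ^ n :=
            Nat.pow_le_pow_right (by omega) (by omega)
          omega
        have hsval : (∑ i ∈ range (t'+1+1), 2 ^ (n + 1 - k i)) = 2 ^ n + s' := by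
          rw [Finset.sum_range_succ', hk1]
          simp only [hs']
          rw [add_comm]
          congr 1
          · apply Finset.sum_congr rfl
            intro i hi
            simp only [Finset.mem_range] at hi
            have h1 := hkn (i+1) (by omega)
            have h2 : k 0 + (i+1) ≤ k (i+1) := hgrow (i+1) (by omega)
            congr 1
            simp only [hk'']
            omega
        rw [hsval, Tsum_rec_high hs'le]
        have IH := ih t' k'' hmono'' hk0'' hkn''
        rw [← hs'] at IH
        push_cast [Nat.cast_sub hs'le]
        rw [IH]
        rw [Finset.sum_range_succ' _ (t'+1), hk1]
        have hcast : (s' : ℝ) = ∑ i ∈ range (t'+1), (2:ℝ) ^ (n + 1 - k (i+1)) := by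
          rw [hs']
          push_cast
          apply Finset.sum_congr rfl
          intro i hi
          simp only [Finset.mem_range] at hi
          congr 1
          have h1 := hkn (i+1) (by omega)
          have h2 : k 0 + (i+1) ≤ k (i+1) := hgrow (i+1) (by omega)
          simp only [hk'']
          omega
        rw [hcast]
        have hterm : ∀ i ∈ range (t'+1),
            ((k'' i : ℝ) - 2 * (i:ℕ)) * 2 ^ (n + 1 - k'' i)
              = ((k (i+1) : ℝ) - 2 * ((i+1 : ℕ) : ℝ)) * 2 ^ (n + 1 + 1 - k (i+1))
                + 2 * 2 ^ (n + 1 - k (i+1)) := by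
          intro i hi
          simp only [Finset.mem_range] at hi
          have h1 := hkn (i+1) (by omega)
          have h2 : k 0 + (i+1) ≤ k (i+1) := hgrow (i+1) (by omega)
          have e1 : n + 1 - k'' i = n + 1 + 1 - k (i+1) := by simp only [hk'']; omega
          have e2 : n + 1 + 1 - k (i+1) = (n + 1 - k (i+1)) + 1 := by omega
          have e3 : ((k'' i : ℝ)) = (k (i+1) : ℝ) - 1 := by
            simp only [hk'']
            push_cast [Nat.cast_sub (by omega : 1 ≤ k (i+1))]
            ring
          rw [e1, e3, e2, pow_succ]
          push_cast
          ring
        rw [Finset.sum_congr rfl hterm, Finset.sum_add_distrib, ← Finset.mul_sum]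
        push_cast
        ring
    · -- k 0 ≥ 2
      have hk02 : 2 ≤ k 0 := by omega
      set k' : ℕ → ℕ := fun i => k i - 1 with hk'
      have hmono' : ∀ i < t, k' i < k' (i+1) := by
        intro i hi
        have h1 := hmono i hi
        have h2 : k 0 + i ≤ k i := hgrow i (by omega)
        simp only [hk']
        omega
      have hk0' : 1 ≤ k' 0 := by simp only [hk']; omega
      have hkn' : ∀ i ≤ t, k' i ≤ n := by
        intro i hi
        have := hkn i hi
        simp only [hk']
        omega
      set s := ∑ i ∈ range (t+1), 2 ^ (n + 1 - k i) with hsdef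
      have hseq : s = ∑ i ∈ range (t+1), 2 ^ (n - k' i) := by
        apply Finset.sum_congr rfl
        intro i hi
        simp only [Finset.mem_range] at hi
        have h2 : k 0 + i ≤ k i := hgrow i (by omega)
        congr 1
        simp only [hk']
        omega
      have hslt : s < 2 ^ (n + 1 - k 0 + 1) := by
        rw [hsdef]; exact sum_bits_lt t k (n+1) hmono hkn
      have hsle : s ≤ 2 ^ n := by
        have hn0 := hkn 0 (by omega)
        have : (2:ℕ) ^ (n + 1 - k 0 + 1) ≤ 2 ^ n := by
          apply Nat.pow_le_pow_right (by omega)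
          omega
        omega
      rw [Tsum_rec_low hsle]
      have IH := ih t k' hmono' hk0' hkn'
      rw [← hseq] at IH
      push_cast
      rw [IH]
      have hcast : (s : ℝ) = ∑ i ∈ range (t+1), (2:ℝ) ^ (n + 1 - k i) := by
        rw [hsdef]; push_cast; rfl
      rw [hcast, Finset.mul_sum, ← Finset.sum_add_distrib]
      apply Finset.sum_congr rfl
      intro i hi
      simp only [Finset.mem_range] at hi
      have h1 := hkn i (by omega)
      have h2 : k 0 + i ≤ k i := hgrow i (by omega)
      have e1 : n + 1 - k' i = n + 1 + 1 - k i := by simp only [hk']; omega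
      have e2 : n + 1 + 1 - k i = (n + 1 - k i) + 1 := by omega
      have e3 : ((k' i : ℝ)) = (k i : ℝ) - 1 := by
        simp only [hk']
        push_cast [Nat.cast_sub (by omega : 1 ≤ k i)]
        ring
      rw [e1, e3, e2, pow_succ]
      ring

/-- If s = Σ_{i=0}^{t} 2^{n-k_i} with 1 ≤ k_0 < k_1 < ⋯ < k_t ≤ n, then
I[ℓ_n⟨s⟩] = Σ_{i=0}^{t} (k_i − 2i)·2^{1−k_i}. -/
theorem influence_lex_bits (n s t : ℕ) (k : ℕ → ℕ)
    (hmono : ∀ i < t, k i < k (i + 1)) (hk0 : 1 ≤ k 0) (hkn : ∀ i ≤ t, k i ≤ n)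
    (hs2n : s ≤ 2 ^ n)
    (hs : s = ∑ i ∈ Finset.range (t + 1), 2 ^ (n - k i)) :
    sensInfluence (lexF n s) =
      ∑ i ∈ Finset.range (t + 1), ((k i : ℝ) - 2 * i) * (2 : ℝ) ^ (1 - (k i : ℤ)) := by
  subst hs
  have h1 : sensInfluence (lexF n (∑ i ∈ Finset.range (t + 1), 2 ^ (n - k i)))
      = (Tsum n (∑ i ∈ Finset.range (t + 1), 2 ^ (n - k i)) : ℝ) / 2 ^ n := by
    unfold sensInfluence Tsum
    rw [Nat.cast_sum]
  rw [h1, main_ind n t k hmono hk0 hkn, Finset.sum_div]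
  apply Finset.sum_congr rfl
  intro i hi
  simp only [Finset.mem_range] at hi
  have hkin : k i ≤ n := hkn i (by omega)
  rw [mul_div_assoc]
  congr 1
  rw [show ((2:ℝ) ^ (n + 1 - k i)) = (2:ℝ) ^ ((n + 1 - k i : ℕ) : ℤ) from (zpow_natCast _ _).symm,
      show ((2:ℝ) ^ n) = (2:ℝ) ^ ((n : ℕ) : ℤ) from (zpow_natCast _ _).symm,
      ← zpow_sub₀ (two_ne_zero)]
  congr 1
  omega
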